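/- arXiv:2411.09354 — 3 statements merged into one kernel-verified Lean document; each statement's English description precedes it below -/
import Mathlib

section
/- Let $u_0 > 0$, $p \geq 0$ with $p \neq 1$, and let $u, v, w : [0,T] \to \mathbb{R}$ be nonnegative continuous functions. If $u(t) \leq u_0 + \int_0^t \big(v(s)u(s) + w(s)u(s)^p\big)\,ds$ for all $t \in [0,T]$, and the quantity $u_0^{1-p} + (1-p)\int_0^t w(s) e^{(p-1)\int_0^s v(r)\,dr}\,ds$ is strictly positive for all $t \in [0,T]$, then $u(t) \leq e^{\int_0^t v(s)\,ds}\Big[u_0^{1-p} + (1-p)\int_0^t w(s)e^{(p-1)\int_0^s v(r)\,dr}\,ds\Big]^{\frac{1}{1-p}}$ for all $t \in [0,T]$. -/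
/-!
With `U = u₀ + ∫₀ᵗ (v u + w uᵖ) ≥ u` and `V = ∫₀ᵗ v`, the integrating factor `Z = U e^{-V}`
satisfies the Bernoulli inequality `Z' ≤ w e^{(p-1)V} Zᵖ`. Hence `Z^{1-p}/(1-p)` grows no faster
than `∫₀ᵗ w e^{(p-1)V}`, and since `x ↦ x^q / q` is increasing on `(0, ∞)` for every `q ≠ 0`,
this inverts to the stated bound on `Z`, whatever the sign of `1 - p`.
-/

open Real MeasureTheory intervalIntegral Set

namespace Real

theorem le_rpow_inv_iff_rpow_div_le_div {x y q : ℝ} (hx : 0 < x) (hy : 0 < y) (hq : q ≠ 0) :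
    x ≤ y ^ q⁻¹ ↔ x ^ q / q ≤ y / q := by
  rcases hq.lt_or_gt with hq | hq
  · rw [le_rpow_inv_iff_of_neg hx hy hq, div_le_div_right_of_neg hq]
  · rw [le_rpow_inv_iff_of_pos hx.le hy.le hq, div_le_div_iff_of_pos_right hq]

end Real

theorem ContinuousOn.continuousOn_primitive {g : ℝ → ℝ} {a b : ℝ} (hab : a ≤ b)
    (hg : ContinuousOn g (Icc a b)) : ContinuousOn (fun x => ∫ s in a..x, g s) (Icc a b) := by
  rw [← uIcc_of_le hab] at hg ⊢
  exact continuousOn_primitive_interval hg.integrableOn_uIcc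

theorem ContinuousOn.hasDerivAt_primitive {g : ℝ → ℝ} {a b x : ℝ}
    (hg : ContinuousOn g (Icc a b)) (hx : x ∈ Ioo a b) :
    HasDerivAt (fun y => ∫ s in a..y, g s) (g x) x :=
  integral_hasDerivAt_right
    ((hg.mono (Icc_subset_Icc le_rfl hx.2.le)).intervalIntegrable_of_Icc hx.1.le)
    ((hg.mono Ioo_subset_Icc_self).stronglyMeasurableAtFilter isOpen_Ioo x hx)
    (hg.continuousAt (Icc_mem_nhds hx.1 hx.2))

theorem HasDerivAt.mul_exp_neg {U V : ℝ → ℝ} {U' v x : ℝ} (hU : HasDerivAt U U' x)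
    (hV : HasDerivAt V v x) :
    HasDerivAt (fun y => U y * Real.exp (-V y)) ((U' - v * U x) * Real.exp (-V x)) x :=
  (hU.mul hV.fun_neg.exp).congr_deriv (by ring)

theorem antitoneOn_rpow_div_sub_of_hasDerivAt_le {Z Z' Γ g : ℝ → ℝ} {a b q : ℝ} (hq : q ≠ 0)
    (hZ : ContinuousOn Z (Icc a b)) (hΓ : ContinuousOn Γ (Icc a b))
    (hZ_pos : ∀ x ∈ Icc a b, 0 < Z x)
    (hZ' : ∀ x ∈ Ioo a b, HasDerivAt Z (Z' x) x) (hΓ' : ∀ x ∈ Ioo a b, HasDerivAt Γ (g x) x)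
    (hle : ∀ x ∈ Ioo a b, Z' x ≤ g x * Z x ^ (1 - q)) :
    AntitoneOn (fun x => Z x ^ q / q - Γ x) (Icc a b) := by
  have hcont : ContinuousOn (fun x => Z x ^ q / q - Γ x) (Icc a b) :=
    ((hZ.rpow_const fun x hx => Or.inl (hZ_pos x hx).ne').div_const q).sub hΓ
  refine antitoneOn_of_hasDerivWithinAt_nonpos (convex_Icc a b) hcont
    (f' := fun x => Z x ^ (q - 1) * Z' x - g x) ?_ ?_ <;> rw [interior_Icc] <;> intro x hx <;>
    have hZx := hZ_pos x (Ioo_subset_Icc_self hx)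
  · refine (((((hZ' x hx).rpow_const (Or.inl hZx.ne')).div_const q).sub
      (hΓ' x hx)).congr_deriv ?_).hasDerivWithinAt
    field_simp
  · have hcancel : Z x ^ (q - 1) * (g x * Z x ^ (1 - q)) = g x := by
      rw [mul_left_comm, ← rpow_add hZx]
      simp
    calc Z x ^ (q - 1) * Z' x - g x ≤ Z x ^ (q - 1) * (g x * Z x ^ (1 - q)) - g x := by
          gcongr; exact hle x hx
      _ = 0 := by rw [hcancel, sub_self]

theorem le_exp_mul_rpow_of_hasDerivAt_le {U U' V v Γ w : ℝ → ℝ} {a b p t : ℝ} (hp : p ≠ 1)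
    (hU : ContinuousOn U (Icc a b)) (hV : ContinuousOn V (Icc a b))
    (hΓ : ContinuousOn Γ (Icc a b)) (hU_pos : ∀ x ∈ Icc a b, 0 < U x)
    (hU' : ∀ x ∈ Ioo a b, HasDerivAt U (U' x) x) (hV' : ∀ x ∈ Ioo a b, HasDerivAt V (v x) x)
    (hΓ' : ∀ x ∈ Ioo a b, HasDerivAt Γ (w x * exp ((p - 1) * V x)) x)
    (hle : ∀ x ∈ Ioo a b, U' x ≤ v x * U x + w x * U x ^ p)
    (hVa : V a = 0) (hΓa : Γ a = 0) (ht : t ∈ Icc a b)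
    (hpos : 0 < U a ^ (1 - p) + (1 - p) * Γ t) :
    U t ≤ exp (V t) * (U a ^ (1 - p) + (1 - p) * Γ t) ^ (1 / (1 - p)) := by
  set Z := fun x => U x * exp (-V x) with hZ
  have hq : 1 - p ≠ 0 := sub_ne_zero.2 hp.symm
  have hZ_pos : ∀ x ∈ Icc a b, 0 < Z x := fun x hx => mul_pos (hU_pos x hx) (exp_pos _)
  have hZ'_le : ∀ x ∈ Ioo a b, (U' x - v x * U x) * exp (-V x) ≤
      w x * exp ((p - 1) * V x) * Z x ^ (1 - (1 - p)) := by
    intro x hx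
    have hZp : w x * exp ((p - 1) * V x) * Z x ^ p = w x * U x ^ p * exp (-V x) := by
      rw [hZ, mul_rpow (hU_pos x (Ioo_subset_Icc_self hx)).le (exp_pos _).le, ← exp_mul,
        mul_mul_mul_comm, ← exp_add]
      ring_nf
    rw [sub_sub_cancel, hZp]
    gcongr
    linarith [hle x hx]
  have hanti := antitoneOn_rpow_div_sub_of_hasDerivAt_le (Z := Z) hq (hU.mul hV.neg.rexp) hΓ
    hZ_pos (fun x hx => (hU' x hx).mul_exp_neg (hV' x hx)) hΓ' hZ'_le
  have hZa : Z a = U a := by simp [hZ, hVa]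
  have hcompare := hanti ⟨le_rfl, ht.1.trans ht.2⟩ ht ht.1
  simp only [hZa, hΓa, sub_zero] at hcompare
  have hZt : Z t ≤ (U a ^ (1 - p) + (1 - p) * Γ t) ^ (1 / (1 - p)) := by
    rw [one_div, le_rpow_inv_iff_rpow_div_le_div (hZ_pos t ht) hpos hq, add_div,
      mul_div_cancel_left₀ _ hq]
    linarith
  calc U t = exp (V t) * Z t := by simp [hZ, mul_left_comm, ← exp_add]
    _ ≤ _ := by gcongr

theorem nonlinear_gronwall_general
    (T : ℝ)
    (u v w : ℝ → ℝ) (u₀ p : ℝ)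
    (hu₀ : 0 < u₀) (hp : 0 ≤ p) (hp1 : p ≠ 1)
    (hu : ContinuousOn u (Set.Icc 0 T))
    (hv : ContinuousOn v (Set.Icc 0 T))
    (hw : ContinuousOn w (Set.Icc 0 T))
    (hu_nonneg : ∀ t ∈ Set.Icc (0:ℝ) T, 0 ≤ u t)
    (hv_nonneg : ∀ t ∈ Set.Icc (0:ℝ) T, 0 ≤ v t)
    (hw_nonneg : ∀ t ∈ Set.Icc (0:ℝ) T, 0 ≤ w t)
    (hineq : ∀ t ∈ Set.Icc (0:ℝ) T,
      u t ≤ u₀ + ∫ s in (0:ℝ)..t, (v s * u s + w s * u s ^ p))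
    (hpos : ∀ t ∈ Set.Icc (0:ℝ) T,
      0 < u₀ ^ (1 - p) + (1 - p) *
        ∫ s in (0:ℝ)..t, w s * Real.exp ((p - 1) * ∫ r in (0:ℝ)..s, v r)) :
    ∀ t ∈ Set.Icc (0:ℝ) T,
      u t ≤ Real.exp (∫ s in (0:ℝ)..t, v s) *
        (u₀ ^ (1 - p) + (1 - p) *
          ∫ s in (0:ℝ)..t, w s * Real.exp ((p - 1) * ∫ r in (0:ℝ)..s, v r))
          ^ (1 / (1 - p)) := by
  intro t ht
  have hT : 0 ≤ T := ht.1.trans ht.2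
  have hV := hv.continuousOn_primitive hT
  set f := fun s => v s * u s + w s * u s ^ p
  set g := fun s => w s * exp ((p - 1) * ∫ r in (0:ℝ)..s, v r)
  have hf : ContinuousOn f (Icc 0 T) :=
    (hv.mul hu).add (hw.mul (hu.rpow_const fun _ _ => Or.inr hp))
  have hg : ContinuousOn g (Icc 0 T) :=
    hw.mul (continuous_exp.comp_continuousOn (continuousOn_const.mul hV))
  have hf_nonneg : ∀ x ∈ Icc 0 T, 0 ≤ f x := fun x hx =>
    add_nonneg (mul_nonneg (hv_nonneg x hx) (hu_nonneg x hx))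
      (mul_nonneg (hw_nonneg x hx) (rpow_nonneg (hu_nonneg x hx) p))
  have hU_pos : ∀ x ∈ Icc (0:ℝ) T, 0 < u₀ + ∫ s in (0:ℝ)..x, f s := fun x hx =>
    add_pos_of_pos_of_nonneg hu₀ <|
      integral_nonneg hx.1 fun s hs => hf_nonneg s ⟨hs.1, hs.2.trans hx.2⟩
  have hf_le : ∀ x ∈ Ioo 0 T, f x ≤ v x * (u₀ + ∫ s in (0:ℝ)..x, f s) +
      w x * (u₀ + ∫ s in (0:ℝ)..x, f s) ^ p := fun x hx => by
    have hx := Ioo_subset_Icc_self hx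
    have := hv_nonneg x hx
    have := hw_nonneg x hx
    have := hu_nonneg x hx
    have := hineq x hx
    show v x * u x + w x * u x ^ p ≤ _
    gcongr
  refine (hineq t ht).trans ?_
  simpa using le_exp_mul_rpow_of_hasDerivAt_le hp1
    (continuousOn_const.add (hf.continuousOn_primitive hT)) hV (hg.continuousOn_primitive hT)
    hU_pos (fun x hx => (hf.hasDerivAt_primitive hx).const_add u₀)
    (fun x hx => hv.hasDerivAt_primitive hx) (fun x hx => hg.hasDerivAt_primitive hx) hf_le
    integral_same integral_same ht (by simpa using hpos t ht)

/-- Willet's nonlinear Grönwall inequality. -/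
theorem nonlinear_gronwall
    (T : ℝ) (hT : 0 ≤ T)
    (u v w : ℝ → ℝ) (u₀ p : ℝ)
    (hu₀ : 0 < u₀) (hp : 0 ≤ p) (hp1 : p ≠ 1)
    (hu : ContinuousOn u (Set.Icc 0 T))
    (hv : ContinuousOn v (Set.Icc 0 T))
    (hw : ContinuousOn w (Set.Icc 0 T))
    (hu_nonneg : ∀ t ∈ Set.Icc (0:ℝ) T, 0 ≤ u t)
    (hv_nonneg : ∀ t ∈ Set.Icc (0:ℝ) T, 0 ≤ v t)
    (hw_nonneg : ∀ t ∈ Set.Icc (0:ℝ) T, 0 ≤ w t)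
    (hineq : ∀ t ∈ Set.Icc (0:ℝ) T,
      u t ≤ u₀ + ∫ s in (0:ℝ)..t, (v s * u s + w s * u s ^ p))
    (hpos : ∀ t ∈ Set.Icc (0:ℝ) T,
      0 < u₀ ^ (1 - p) + (1 - p) *
        ∫ s in (0:ℝ)..t, w s * Real.exp ((p - 1) * ∫ r in (0:ℝ)..s, v r)) :
    ∀ t ∈ Set.Icc (0:ℝ) T,
      u t ≤ Real.exp (∫ s in (0:ℝ)..t, v s) *
        (u₀ ^ (1 - p) + (1 - p) *
          ∫ s in (0:ℝ)..t, w s * Real.exp ((p - 1) * ∫ r in (0:ℝ)..s, v r))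
          ^ (1 / (1 - p)) :=
  nonlinear_gronwall_general T u v w u₀ p hu₀ hp hp1 hu hv hw hu_nonneg hv_nonneg hw_nonneg hineq
    hpos
end

section
/- For every $C > 0$, $p > 1$ and $T > 0$ there exist $\varepsilon > 0$ and $C' > 0$ such that: if $u_0 \in (0, \varepsilon]$ and $f : [0,T] \to \mathbb{R}$ is a nonnegative continuous function satisfying $f(t) \leq C\big(u_0 + \int_0^t (f(s) + f(s)^p)\,ds\big)$ for all $t \in [0,T]$, then $f(t) \leq C' u_0$ for all $t \in [0,T]$. -/
/-! While `f` stays below `C' u₀ ≤ 1` we have `f ^ p ≤ f`, so the hypothesis linearises to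
`f t ≤ C u₀ + 2C ∫₀ᵗ f`, and the linear integral Grönwall inequality gives
`f ≤ C u₀ e^{2CT} < 2C e^{2CT} u₀ = C' u₀`. By continuity `f` can therefore never reach the
threshold `C' u₀`. -/

open Real MeasureTheory intervalIntegral

open Set Topology

theorem ContinuousOn.forall_lt_of_bootstrap {α β : Type*} [ConditionallyCompleteLinearOrder α]
    [TopologicalSpace α] [OrderTopology α] [LinearOrder β] [TopologicalSpace β]
    [OrderClosedTopology β] {g : α → β} {a b : α} {B : β} (hg : ContinuousOn g (Icc a b))
    (hstep : ∀ t ∈ Icc a b, (∀ s ∈ Ico a t, g s < B) → g t < B) :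
    ∀ t ∈ Icc a b, g t < B := by
  by_contra! ⟨t₁, ht₁, hBt₁⟩
  set bad := Icc a b ∩ g ⁻¹' Ici B
  have hbad : IsClosed bad := hg.preimage_isClosed_of_isClosed isClosed_Icc isClosed_Ici
  have hbdd : BddBelow bad := ⟨a, fun x hx => hx.1.1⟩
  have hfirst : sInf bad ∈ bad := hbad.csInf_mem ⟨t₁, ht₁, hBt₁⟩ hbdd
  refine not_lt_of_ge hfirst.2 (hstep _ hfirst.1 fun s hs => lt_of_not_ge fun hBs => ?_)
  exact hs.2.not_ge (csInf_le hbdd ⟨⟨hs.1, hs.2.le.trans hfirst.1.2⟩, hBs⟩)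

theorem hasDerivWithinAt_integral_Ici_of_continuousOn {E : Type*} [NormedAddCommGroup E]
    [NormedSpace ℝ E] [CompleteSpace E] {f : ℝ → E} {a b x : ℝ}
    (hf : ContinuousOn f (Icc a b)) (hx : x ∈ Ico a b) :
    HasDerivWithinAt (fun u => ∫ s in a..u, f s) (f x) (Ici x) x := by
  have hIcc : Icc a b ∈ 𝓝[>] x := Icc_mem_nhdsGT_of_mem hx
  refine integral_hasDerivWithinAt_right
    ((hf.mono (Icc_subset_Icc_right hx.2.le)).intervalIntegrable_of_Icc hx.1) ?_
    ((hf x (Ico_subset_Icc_self hx)).mono_of_mem_nhdsWithin hIcc)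
  exact (hf.stronglyMeasurableAtFilter_nhdsWithin measurableSet_Icc x).filter_mono
    (nhdsWithin_le_iff.mpr hIcc)

theorem le_mul_exp_of_le_add_mul_integral {f : ℝ → ℝ} {a b c K : ℝ} (hK : 0 ≤ K)
    (hf : ContinuousOn f (Icc a b)) (h : ∀ t ∈ Icc a b, f t ≤ c + K * ∫ s in a..t, f s) :
    ∀ t ∈ Icc a b, f t ≤ c * exp (K * (t - a)) := by
  intro t ht
  have hab : a ≤ b := ht.1.trans ht.2
  -- Grönwall for the primitive `F = ∫ₐ f`, whose right derivative `f` is at most `K F + c`.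
  have hF : ∀ x ∈ Icc a b, ∫ s in a..x, f s ≤ gronwallBound 0 K c (x - a) := by
    refine le_gronwallBound_of_liminf_deriv_right_le (f' := f) ?_
      (fun x hx r hr =>
        (hasDerivWithinAt_integral_Ici_of_continuousOn hf hx).liminf_right_slope_le hr)
      (by simp) (fun x hx => by linarith [h x (Ico_subset_Icc_self hx)])
    rw [← uIcc_of_le hab] at hf ⊢
    exact continuousOn_primitive_interval (hf.integrableOn_compact isCompact_uIcc)
  rcases hK.eq_or_lt with rfl | hKpos
  · simpa using h t ht
  calc f t ≤ c + K * ∫ s in a..t, f s := h t ht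
    _ ≤ c + K * gronwallBound 0 K c (t - a) := by gcongr; exact hF t ht
    _ = c * exp (K * (t - a)) := by
      rw [gronwallBound_of_K_ne_0 hKpos.ne']; field_simp; ring

theorem integral_add_rpow_le_two_mul_integral {f : ℝ → ℝ} {a b p : ℝ} (hab : a ≤ b)
    (hp : 1 ≤ p) (hf : ContinuousOn f (Icc a b)) (hf₀ : ∀ s ∈ Ioo a b, 0 ≤ f s)
    (hf₁ : ∀ s ∈ Ioo a b, f s ≤ 1) :
    ∫ s in a..b, (f s + f s ^ p) ≤ 2 * ∫ s in a..b, f s := by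
  rw [← intervalIntegral.integral_const_mul]
  refine integral_mono_on_of_le_Ioo hab ?_ ?_ fun s hs => ?_
  · exact (hf.add (hf.rpow_const fun _ _ => Or.inr (by linarith))).intervalIntegrable_of_Icc hab
  · exact (hf.const_smul (2 : ℝ)).intervalIntegrable_of_Icc hab
  · linarith [rpow_le_self_of_le_one (hf₀ s hs) (hf₁ s hs) hp]

theorem small_data_gronwall_general (C p T : ℝ) (hC : 0 < C) (hp : 1 < p) :
    ∃ ε > (0:ℝ), ∃ C' > (0:ℝ),
      ∀ (u₀ : ℝ), u₀ ∈ Set.Ioc (0:ℝ) ε →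
      ∀ (f : ℝ → ℝ), ContinuousOn f (Set.Icc 0 T) →
        (∀ t ∈ Set.Icc (0:ℝ) T, 0 ≤ f t) →
        (∀ t ∈ Set.Icc (0:ℝ) T,
          f t ≤ C * (u₀ + ∫ s in (0:ℝ)..t, (f s + f s ^ p))) →
        ∀ t ∈ Set.Icc (0:ℝ) T, f t ≤ C' * u₀ := by
  set C' := 2 * C * exp (2 * C * T)
  have hC' : 0 < C' := by positivity
  refine ⟨C'⁻¹, by positivity, C', hC', fun u₀ ⟨hu₀, hu₀ε⟩ f hf hf₀ hfle => ?_⟩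
  have hB : C' * u₀ ≤ 1 := (le_inv_mul_iff₀ hC').mp (by rwa [mul_one])
  suffices ∀ t ∈ Icc 0 T, f t < C' * u₀ from fun t ht => (this t ht).le
  refine hf.forall_lt_of_bootstrap fun t ht hlt => ?_
  have hsub : Icc 0 t ⊆ Icc 0 T := Icc_subset_Icc_right ht.2
  have hlin : ∀ s ∈ Icc 0 t, f s ≤ C * u₀ + 2 * C * ∫ r in 0..s, f r := by
    intro s hs
    have hI := integral_add_rpow_le_two_mul_integral hs.1 hp.le
      (hf.mono (hsub.trans' (Icc_subset_Icc_right hs.2)))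
      (fun r hr => hf₀ r ⟨hr.1.le, hr.2.le.trans (hs.2.trans ht.2)⟩)
      (fun r hr => (hlt r ⟨hr.1.le, hr.2.trans_le hs.2⟩).le.trans hB)
    nlinarith [hfle s (hsub hs)]
  calc f t ≤ C * u₀ * exp (2 * C * (t - 0)) :=
        le_mul_exp_of_le_add_mul_integral (by positivity) (hf.mono hsub) hlin t ⟨ht.1, le_rfl⟩
    _ ≤ C * u₀ * exp (2 * C * T) := by gcongr; linarith [ht.2]
    _ < C' * u₀ := by nlinarith [exp_pos (2 * C * T), mul_pos hC hu₀]

/-- Small-data corollary of the nonlinear Grönwall inequality. -/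
theorem small_data_gronwall (C p T : ℝ) (hC : 0 < C) (hp : 1 < p) (hT : 0 < T) :
    ∃ ε > (0:ℝ), ∃ C' > (0:ℝ),
      ∀ (u₀ : ℝ), u₀ ∈ Set.Ioc (0:ℝ) ε →
      ∀ (f : ℝ → ℝ), ContinuousOn f (Set.Icc 0 T) →
        (∀ t ∈ Set.Icc (0:ℝ) T, 0 ≤ f t) →
        (∀ t ∈ Set.Icc (0:ℝ) T,
          f t ≤ C * (u₀ + ∫ s in (0:ℝ)..t, (f s + f s ^ p))) →
        ∀ t ∈ Set.Icc (0:ℝ) T, f t ≤ C' * u₀ :=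
  small_data_gronwall_general C p T hC hp
end

section
/- Let $\eta = \mathrm{diag}(-1,1,1,1)$ on $\mathbb{R}^4$ and let $V, W \in \mathbb{R}^4$ be future-directed timelike vectors ($\eta(V,V) < 0$, $\eta(W,W) < 0$, $V^0 > 0$, $W^0 > 0$). Then there exists a constant $C > 0$ (depending only on $V$ and $W$) such that for every covector $\xi \in \mathbb{R}^4$, $Q_\xi(V,W) := \langle \xi, V\rangle \langle \xi, W\rangle - \tfrac12\big(-\xi_0^2 + \xi_1^2 + \xi_2^2 + \xi_3^2\big)\,\eta(V,W) \geq C\big(\xi_0^2 + \xi_1^2 + \xi_2^2 + \xi_3^2\big)$. -/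
/-!
Contracting the energy-momentum tensor with `V` gives the current `J = -Q(V, ·)`, and
`η(J, J) = ¼ η(ξ, ξ)² η(V, V) ≤ 0`, so `J` is causal; its time component is at least
`½ (V⁰ - |V⃗|) |ξ|²` by Cauchy–Schwarz and AM-GM. Cauchy–Schwarz once more gives
`Q(V, W) = -η(J, W) ≥ J⁰ (W⁰ - |W⃗|) ≥ ½ (V⁰ - |V⃗|) (W⁰ - |W⃗|) |ξ|²`.
-/

open RealInnerProductSpace

namespace Minkowski

noncomputable section

variable {E : Type*} [NormedAddCommGroup E] [InnerProductSpace ℝ E]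

def pairing (ξ V : ℝ × E) : ℝ := ξ.1 * V.1 + ⟪ξ.2, V.2⟫

def minkowskiForm (V W : ℝ × E) : ℝ := -(V.1 * W.1) + ⟪V.2, W.2⟫

def energyMomentum (ξ V W : ℝ × E) : ℝ :=
  pairing ξ V * pairing ξ W - 1 / 2 * minkowskiForm ξ ξ * minkowskiForm V W

def energyCurrent (ξ V : ℝ × E) : ℝ × E :=
  (pairing ξ V * ξ.1 + minkowskiForm ξ ξ / 2 * V.1,
    -(pairing ξ V • ξ.2) + (minkowskiForm ξ ξ / 2) • V.2)

theorem minkowskiForm_self (V : ℝ × E) : minkowskiForm V V = ‖V.2‖ ^ 2 - V.1 ^ 2 := by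
  rw [minkowskiForm, real_inner_self_eq_norm_sq]; ring

theorem minkowskiForm_self_nonpos_iff {V : ℝ × E} (h0 : 0 ≤ V.1) :
    minkowskiForm V V ≤ 0 ↔ ‖V.2‖ ≤ V.1 := by
  rw [minkowskiForm_self, sub_nonpos, pow_le_pow_iff_left₀ (norm_nonneg _) h0 two_ne_zero]

theorem minkowskiForm_self_neg_iff {V : ℝ × E} (h0 : 0 ≤ V.1) :
    minkowskiForm V V < 0 ↔ ‖V.2‖ < V.1 := by
  rw [minkowskiForm_self, sub_neg, pow_lt_pow_iff_left₀ (norm_nonneg _) h0 two_ne_zero]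

theorem mul_sub_norm_le_neg_minkowskiForm {J : ℝ × E} (hJ : ‖J.2‖ ≤ J.1) (W : ℝ × E) :
    J.1 * (W.1 - ‖W.2‖) ≤ -minkowskiForm J W := by
  have := real_inner_le_norm J.2 W.2
  have := mul_le_mul_of_nonneg_right hJ (norm_nonneg W.2)
  rw [minkowskiForm]; linarith

theorem energyMomentum_eq_neg_minkowskiForm (ξ V W : ℝ × E) :
    energyMomentum ξ V W = -minkowskiForm (energyCurrent ξ V) W := by
  simp only [energyMomentum, energyCurrent, minkowskiForm, pairing, inner_add_left,
    inner_neg_left, real_inner_smul_left]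
  ring

theorem minkowskiForm_energyCurrent_self (ξ V : ℝ × E) :
    minkowskiForm (energyCurrent ξ V) (energyCurrent ξ V) =
      (minkowskiForm ξ ξ / 2) ^ 2 * minkowskiForm V V := by
  simp only [energyCurrent, minkowskiForm, pairing, inner_add_left, inner_add_right,
    inner_neg_left, inner_neg_right, real_inner_smul_left, real_inner_smul_right,
    real_inner_comm V.2 ξ.2]
  ring

theorem energyCurrent_fst_ge (ξ V : ℝ × E) :
    1 / 2 * (V.1 - ‖V.2‖) * (ξ.1 ^ 2 + ‖ξ.2‖ ^ 2) ≤ (energyCurrent ξ V).1 := by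
  -- `|ξ₀ ⟪ξ, v⟫| ≤ |ξ₀| ‖ξ‖ ‖v‖ ≤ ½ (ξ₀² + ‖ξ‖²) ‖v‖`
  have hcs : |ξ.1 * ⟪ξ.2, V.2⟫| ≤ |ξ.1| * ‖ξ.2‖ * ‖V.2‖ := by
    rw [abs_mul, mul_assoc]
    exact mul_le_mul_of_nonneg_left (abs_real_inner_le_norm _ _) (abs_nonneg _)
  have hamgm : 2 * |ξ.1| * ‖ξ.2‖ ≤ ξ.1 ^ 2 + ‖ξ.2‖ ^ 2 := by
    simpa only [sq_abs] using two_mul_le_add_sq |ξ.1| ‖ξ.2‖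
  have := mul_le_mul_of_nonneg_right hamgm (norm_nonneg V.2)
  have := neg_abs_le (ξ.1 * ⟪ξ.2, V.2⟫)
  simp only [energyCurrent, pairing, minkowskiForm, real_inner_self_eq_norm_sq]
  linarith

theorem energyCurrent_fst_nonneg (ξ : ℝ × E) {V : ℝ × E} (hV : ‖V.2‖ ≤ V.1) :
    0 ≤ (energyCurrent ξ V).1 :=
  (mul_nonneg (mul_nonneg one_half_pos.le (sub_nonneg.2 hV)) (by positivity)).trans
    (energyCurrent_fst_ge ξ V)

theorem norm_energyCurrent_snd_le (ξ : ℝ × E) {V : ℝ × E} (hV : ‖V.2‖ ≤ V.1) :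
    ‖(energyCurrent ξ V).2‖ ≤ (energyCurrent ξ V).1 := by
  refine (minkowskiForm_self_nonpos_iff (energyCurrent_fst_nonneg ξ hV)).1 ?_
  rw [minkowskiForm_energyCurrent_self]
  have hVV := (minkowskiForm_self_nonpos_iff ((norm_nonneg _).trans hV)).2 hV
  exact mul_nonpos_of_nonneg_of_nonpos (sq_nonneg _) hVV

theorem energyMomentum_ge (ξ : ℝ × E) {V W : ℝ × E} (hV : ‖V.2‖ ≤ V.1) (hW : ‖W.2‖ ≤ W.1) :
    1 / 2 * (V.1 - ‖V.2‖) * (W.1 - ‖W.2‖) * (ξ.1 ^ 2 + ‖ξ.2‖ ^ 2) ≤ energyMomentum ξ V W :=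
  calc 1 / 2 * (V.1 - ‖V.2‖) * (W.1 - ‖W.2‖) * (ξ.1 ^ 2 + ‖ξ.2‖ ^ 2)
      = 1 / 2 * (V.1 - ‖V.2‖) * (ξ.1 ^ 2 + ‖ξ.2‖ ^ 2) * (W.1 - ‖W.2‖) := by ring
    _ ≤ (energyCurrent ξ V).1 * (W.1 - ‖W.2‖) :=
      mul_le_mul_of_nonneg_right (energyCurrent_fst_ge ξ V) (sub_nonneg.2 hW)
    _ ≤ -minkowskiForm (energyCurrent ξ V) W :=
      mul_sub_norm_le_neg_minkowskiForm (norm_energyCurrent_snd_le ξ hV) W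
    _ = energyMomentum ξ V W := (energyMomentum_eq_neg_minkowskiForm ξ V W).symm

theorem exists_pos_mul_le_energyMomentum {V W : ℝ × E} (hV : ‖V.2‖ < V.1) (hW : ‖W.2‖ < W.1) :
    ∃ C > 0, ∀ ξ : ℝ × E, C * (ξ.1 ^ 2 + ‖ξ.2‖ ^ 2) ≤ energyMomentum ξ V W :=
  ⟨1 / 2 * (V.1 - ‖V.2‖) * (W.1 - ‖W.2‖),
    by have := sub_pos.2 hV; have := sub_pos.2 hW; positivity,
    fun ξ => energyMomentum_ge ξ hV.le hW.le⟩

def timeSpaceSplit (x : Fin 4 → ℝ) : ℝ × EuclideanSpace ℝ (Fin 3) := (x 0, !₂[x 1, x 2, x 3])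

theorem inner_timeSpaceSplit_snd (x y : Fin 4 → ℝ) :
    ⟪(timeSpaceSplit x).2, (timeSpaceSplit y).2⟫ = x 1 * y 1 + x 2 * y 2 + x 3 * y 3 := by
  simp only [timeSpaceSplit, PiLp.inner_apply, RCLike.inner_apply, Real.ringHom_apply,
    Fin.sum_univ_three, Matrix.cons_val_zero, Matrix.cons_val_one, Matrix.cons_val]
  ring

theorem pairing_timeSpaceSplit (ξ V : Fin 4 → ℝ) :
    pairing (timeSpaceSplit ξ) (timeSpaceSplit V) =
      ξ 0 * V 0 + ξ 1 * V 1 + ξ 2 * V 2 + ξ 3 * V 3 := by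
  rw [pairing, inner_timeSpaceSplit_snd, timeSpaceSplit, timeSpaceSplit]
  ring

theorem minkowskiForm_timeSpaceSplit (V W : Fin 4 → ℝ) :
    minkowskiForm (timeSpaceSplit V) (timeSpaceSplit W) =
      -(V 0 * W 0) + V 1 * W 1 + V 2 * W 2 + V 3 * W 3 := by
  rw [minkowskiForm, inner_timeSpaceSplit_snd, timeSpaceSplit, timeSpaceSplit]
  ring

theorem energyMomentum_timeSpaceSplit (ξ V W : Fin 4 → ℝ) :
    energyMomentum (timeSpaceSplit ξ) (timeSpaceSplit V) (timeSpaceSplit W) =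
      (ξ 0 * V 0 + ξ 1 * V 1 + ξ 2 * V 2 + ξ 3 * V 3) *
          (ξ 0 * W 0 + ξ 1 * W 1 + ξ 2 * W 2 + ξ 3 * W 3) -
        (1 / 2) * (-(ξ 0 ^ 2) + ξ 1 ^ 2 + ξ 2 ^ 2 + ξ 3 ^ 2) *
          (-(V 0 * W 0) + V 1 * W 1 + V 2 * W 2 + V 3 * W 3) := by
  rw [energyMomentum, pairing_timeSpaceSplit, pairing_timeSpaceSplit,
    minkowskiForm_timeSpaceSplit, minkowskiForm_timeSpaceSplit]
  ring

theorem sq_add_norm_sq_timeSpaceSplit (ξ : Fin 4 → ℝ) :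
    (timeSpaceSplit ξ).1 ^ 2 + ‖(timeSpaceSplit ξ).2‖ ^ 2 =
      ξ 0 ^ 2 + ξ 1 ^ 2 + ξ 2 ^ 2 + ξ 3 ^ 2 := by
  rw [← real_inner_self_eq_norm_sq, inner_timeSpaceSplit_snd, timeSpaceSplit]
  ring

theorem norm_snd_lt_fst_timeSpaceSplit {V : Fin 4 → ℝ}
    (h : -(V 0 * V 0) + V 1 * V 1 + V 2 * V 2 + V 3 * V 3 < 0) (h0 : 0 < V 0) :
    ‖(timeSpaceSplit V).2‖ < (timeSpaceSplit V).1 := by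
  rw [← minkowskiForm_self_neg_iff h0.le, minkowskiForm_timeSpaceSplit]
  exact h

end

end Minkowski

open Minkowski in
/-- Positive definiteness of the energy-momentum tensor contracted with two
future-directed timelike vectors (Aretakis' lemma, pointwise version). -/
theorem energy_momentum_pos_def (V W : Fin 4 → ℝ)
    (hV_timelike : -(V 0 * V 0) + V 1 * V 1 + V 2 * V 2 + V 3 * V 3 < 0)
    (hW_timelike : -(W 0 * W 0) + W 1 * W 1 + W 2 * W 2 + W 3 * W 3 < 0)
    (hV_future : 0 < V 0) (hW_future : 0 < W 0) :
    ∃ C > (0:ℝ), ∀ ξ : Fin 4 → ℝ,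
      C * (ξ 0 ^ 2 + ξ 1 ^ 2 + ξ 2 ^ 2 + ξ 3 ^ 2) ≤
        (ξ 0 * V 0 + ξ 1 * V 1 + ξ 2 * V 2 + ξ 3 * V 3) *
          (ξ 0 * W 0 + ξ 1 * W 1 + ξ 2 * W 2 + ξ 3 * W 3) -
        (1 / 2) * (-(ξ 0 ^ 2) + ξ 1 ^ 2 + ξ 2 ^ 2 + ξ 3 ^ 2) *
          (-(V 0 * W 0) + V 1 * W 1 + V 2 * W 2 + V 3 * W 3) := by
  obtain ⟨C, hC, hCle⟩ := exists_pos_mul_le_energyMomentum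
    (norm_snd_lt_fst_timeSpaceSplit hV_timelike hV_future)
    (norm_snd_lt_fst_timeSpaceSplit hW_timelike hW_future)
  refine ⟨C, hC, fun ξ => ?_⟩
  simpa only [sq_add_norm_sq_timeSpaceSplit, energyMomentum_timeSpaceSplit]
    using hCle (timeSpaceSplit ξ)
end
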